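/- In the setting of the previous identity, define P := I_d − (a−A) M Φ⁻¹ Mᵀ. Then P is an (oblique) projection: P² = P; moreover P V = V, Mᵀ P = 0, and P (a−A) M = 0. -/

import Mathlib

/-!
The skew part `A` contributes nothing to a quadratic form, so
`z ↦ zᵀ Φ z = (M z)ᵀ a (M z)` is positive definite and `Φ` is invertible. Writing `X = (a - A) M`
and `Y = Mᵀ`, we have `P = 1 - X (Y X)⁻¹ Y`, so `Y P = 0` and `P X = 0` by cancelling
`(Y X)⁻¹`, and `P` fixes everything killed by `Y`: the columns of `V`, and those of `P` itself.
-/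

open Matrix

section ObliqueProjection

variable {R n m : Type*} [Fintype n] [DecidableEq n] [Fintype m] [DecidableEq m] [CommRing R]

/-- The projection `1 - X (Y X)⁻¹ Y`, onto `ker Y` along the range of `X`. -/
noncomputable def obliqueProj (X : Matrix n m R) (Y : Matrix m n R) : Matrix n n R :=
  1 - X * (Y * X)⁻¹ * Y

variable {X : Matrix n m R} {Y : Matrix m n R}

theorem mul_obliqueProj (h : IsUnit (Y * X)) : Y * obliqueProj X Y = 0 := by
  rw [obliqueProj, Matrix.mul_sub, Matrix.mul_one, ← Matrix.mul_assoc, ← Matrix.mul_assoc,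
    Matrix.mul_nonsing_inv _ ((isUnit_iff_isUnit_det _).mp h), Matrix.one_mul, sub_self]

theorem obliqueProj_mul (h : IsUnit (Y * X)) : obliqueProj X Y * X = 0 := by
  rw [obliqueProj, Matrix.sub_mul, Matrix.one_mul, Matrix.mul_assoc _ Y, Matrix.mul_assoc,
    Matrix.nonsing_inv_mul _ ((isUnit_iff_isUnit_det _).mp h), Matrix.mul_one, sub_self]

theorem obliqueProj_mul_of_mul_eq_zero {l : Type*} {V : Matrix n l R} (hV : Y * V = 0) :
    obliqueProj X Y * V = V := by
  rw [obliqueProj, Matrix.sub_mul, Matrix.one_mul, Matrix.mul_assoc, hV, Matrix.mul_zero,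
    sub_zero]

theorem obliqueProj_mul_self (h : IsUnit (Y * X)) :
    obliqueProj X Y * obliqueProj X Y = obliqueProj X Y :=
  obliqueProj_mul_of_mul_eq_zero (mul_obliqueProj h)

end ObliqueProjection

section PositiveQuadraticForm

variable {R n m : Type*} [Fintype n] [Fintype m]

theorem dotProduct_mulVec_self_eq_zero_of_transpose_eq_neg
    [CommRing R] [LinearOrder R] [IsStrictOrderedRing R] {A : Matrix n n R} (hA : Aᵀ = -A)
    (x : n → R) : x ⬝ᵥ A *ᵥ x = 0 := by
  have h : x ⬝ᵥ A *ᵥ x = -(x ⬝ᵥ A *ᵥ x) := by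
    conv_lhs => rw [dotProduct_mulVec, ← mulVec_transpose, hA, neg_mulVec, neg_dotProduct,
      dotProduct_comm]
  linarith

theorem isUnit_of_forall_dotProduct_mulVec_pos [DecidableEq m] [Field R] [PartialOrder R]
    {B : Matrix m m R}
    (hB : ∀ x ≠ 0, 0 < x ⬝ᵥ B *ᵥ x) : IsUnit B := by
  rw [isUnit_iff_isUnit_det, isUnit_iff_ne_zero]
  intro hdet
  obtain ⟨x, hx, hBx⟩ := exists_mulVec_eq_zero_iff.mpr hdet
  simpa [hBx] using hB x hx

theorem transpose_mul_mul_dotProduct_mulVec_pos [CommSemiring R] [Preorder R]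
    {B : Matrix n n R} {M : Matrix n m R}
    (hB : ∀ x ≠ 0, 0 < x ⬝ᵥ B *ᵥ x) (hM : Function.Injective M.mulVec) :
    ∀ z ≠ 0, 0 < z ⬝ᵥ (Mᵀ * B * M) *ᵥ z := by
  intro z hz
  have hMz : M *ᵥ z ≠ 0 := fun h => hz (hM (h.trans (mulVec_zero M).symm))
  rw [← mulVec_mulVec, ← mulVec_mulVec, dotProduct_mulVec, vecMul_transpose]
  exact hB _ hMz

end PositiveQuadraticForm

theorem stmt6_general {d k : ℕ} (a A : Matrix (Fin d) (Fin d) ℝ)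
    (M : Matrix (Fin d) (Fin k) ℝ) (V : Matrix (Fin d) (Fin (d - k)) ℝ)
    (ha : a.PosDef) (hA : Aᵀ = -A)
    (hM : Function.Injective M.mulVec)
    (hVM : Vᵀ * M = 0)
    (P : Matrix (Fin d) (Fin d) ℝ)
    (hP : P = 1 - (a - A) * M * (Mᵀ * (a - A) * M)⁻¹ * Mᵀ) :
    P * P = P ∧ P * V = V ∧ Mᵀ * P = 0 ∧ P * (a - A) * M = 0 := by
  have hpos : ∀ x ≠ 0, 0 < x ⬝ᵥ (a - A) *ᵥ x := fun x hx => by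
    simpa [sub_mulVec, dotProduct_sub,
      dotProduct_mulVec_self_eq_zero_of_transpose_eq_neg hA] using ha.dotProduct_mulVec_pos hx
  have hΦ : IsUnit (Mᵀ * ((a - A) * M)) := by
    rw [← Matrix.mul_assoc]
    exact isUnit_of_forall_dotProduct_mulVec_pos (transpose_mul_mul_dotProduct_mulVec_pos hpos hM)
  have hMV : Mᵀ * V = 0 := by simpa using congrArg transpose hVM
  have hP' : P = obliqueProj ((a - A) * M) Mᵀ := by rw [hP, obliqueProj, Matrix.mul_assoc Mᵀ]
  subst hP'
  rw [Matrix.mul_assoc _ (a - A)]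
  exact ⟨obliqueProj_mul_self hΦ, obliqueProj_mul_of_mul_eq_zero hMV, mul_obliqueProj hΦ,
    obliqueProj_mul hΦ⟩

/-- `P := I - (a-A) M Φ⁻¹ Mᵀ` is an oblique projection: `P² = P`, `P V = V`, `Mᵀ P = 0`
and `P (a-A) M = 0`. -/
theorem stmt6 {d k : ℕ} (hk : k ≤ d) (a A : Matrix (Fin d) (Fin d) ℝ)
    (M : Matrix (Fin d) (Fin k) ℝ) (V : Matrix (Fin d) (Fin (d - k)) ℝ)
    (ha : a.PosDef) (hA : Aᵀ = -A)
    (hM : Function.Injective M.mulVec) (hV : Function.Injective V.mulVec)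
    (hVM : Vᵀ * M = 0)
    (P : Matrix (Fin d) (Fin d) ℝ)
    (hP : P = 1 - (a - A) * M * (Mᵀ * (a - A) * M)⁻¹ * Mᵀ) :
    P * P = P ∧ P * V = V ∧ Mᵀ * P = 0 ∧ P * (a - A) * M = 0 :=
  stmt6_general a A M V ha hA hM hVM P hP
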